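/- arXiv:2107.11954 — 3 statements merged into one kernel-verified Lean document; each statement's English description precedes it below -/
import Mathlib

section
/- Let E be a real inner product space, let F : E → ℝ be convex and differentiable, let K be a positive integer, let p_1, …, p_K be nonnegative real weights with p_1 + ⋯ + p_K = 1, and let D^1, …, D^K be points of E. Set h* = Σ_{k=1}^K p_k · D^k. Then h* is a minimizer of the map h ↦ Σ_{k=1}^K p_k · B_F(D^k, h); that is, for every h ∈ E, Σ_{k=1}^K p_k · B_F(D^k, h*) ≤ Σ_{k=1}^K p_k · B_F(D^k, h). -/
open scoped RealInnerProductSpace BigOperators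

/-- The Bregman divergence of `x` from `y` associated with a differentiable
function `F : E → ℝ`: `B_F(x, y) = F x - F y - ⟪∇F(y), x - y⟫`. -/
noncomputable def bregman {E : Type*} [NormedAddCommGroup E] [InnerProductSpace ℝ E]
    [CompleteSpace E] (F : E → ℝ) (x y : E) : ℝ :=
  F x - F y - ⟪gradient F y, x - y⟫

lemma first_order {E : Type*} [NormedAddCommGroup E] [InnerProductSpace ℝ E]
    [CompleteSpace E] (F : E → ℝ) (hFconv : ConvexOn ℝ Set.univ F)
    (hFdiff : Differentiable ℝ F) (x y : E) :
    F x + ⟪gradient F x, y - x⟫ ≤ F y := by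
  set g : ℝ → ℝ := F ∘ (AffineMap.lineMap x y) with hg
  have hgconv : ConvexOn ℝ Set.univ g := by
    have := hFconv.comp_affineMap (AffineMap.lineMap x y : ℝ →ᵃ[ℝ] E)
    simpa using this
  have hline : ∀ t : ℝ, (AffineMap.lineMap x y : ℝ →ᵃ[ℝ] E) t = x + t • (y - x) := by
    intro t; simp [AffineMap.lineMap_apply]; abel
  have hc : HasDerivAt (fun t : ℝ => x + t • (y - x)) (y - x) 0 := by
    simpa using ((hasDerivAt_id (0:ℝ)).smul_const (y - x)).const_add x
  have hgrad : HasGradientAt F (gradient F x) x := (hFdiff x).hasGradientAt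
  have hF' : HasFDerivAt F (InnerProductSpace.toDual ℝ E (gradient F x)) x := hgrad
  have hgd : HasDerivAt g ⟪gradient F x, y - x⟫ 0 := by
    have hF'' : HasFDerivAt F (InnerProductSpace.toDual ℝ E (gradient F x))
        (x + (0:ℝ) • (y - x)) := by simpa using hF'
    have := hF''.comp_hasDerivAt (0:ℝ) hc
    have heq : g = F ∘ (fun t : ℝ => x + t • (y - x)) := by
      funext t; simp [hg, hline t]
    rw [heq]
    simpa [InnerProductSpace.toDual_apply_apply] using this
  have hslope := hgconv.le_slope_of_hasDerivAt (Set.mem_univ (0:ℝ))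
    (Set.mem_univ (1:ℝ)) one_pos hgd
  have hs : slope g 0 1 = g 1 - g 0 := by simp [slope_def_field]
  rw [hs] at hslope
  have hg0 : g 0 = F x := by simp [hg]
  have hg1 : g 1 = F y := by simp [hg]
  rw [hg0, hg1] at hslope
  linarith

/-- If `F` is convex and differentiable, then `h* = ∑ k, p k • D k` minimizes
`h ↦ ∑ k, p k * B_F(D k, h)`. -/
theorem bregman_weighted_sum_isMinOn
    {E : Type*} [NormedAddCommGroup E] [InnerProductSpace ℝ E] [CompleteSpace E]
    (F : E → ℝ) (hFconv : ConvexOn ℝ Set.univ F) (hFdiff : Differentiable ℝ F)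
    (K : ℕ) (hK : 0 < K) (p : Fin K → ℝ) (hp : ∀ k, 0 ≤ p k)
    (hpsum : ∑ k, p k = 1) (D : Fin K → E) :
    ∀ h : E,
      ∑ k, p k * bregman F (D k) (∑ k, p k • D k) ≤ ∑ k, p k * bregman F (D k) h := by
  intro h
  set hs : E := ∑ k, p k • D k with hhs
  have key : ∀ (u : E), ∑ k, p k * ⟪gradient F u, D k - u⟫ = ⟪gradient F u, hs - u⟫ := by
    intro u
    have : ∑ k, p k * ⟪gradient F u, D k - u⟫
        = ⟪gradient F u, ∑ k, p k • (D k - u)⟫ := by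
      rw [inner_sum]
      congr 1; funext k
      rw [real_inner_smul_right]
    rw [this]
    congr 1
    simp only [smul_sub, Finset.sum_sub_distrib, ← Finset.sum_smul, hpsum, one_smul, hhs]
  have expand : ∀ (u : E), ∑ k, p k * bregman F (D k) u
      = ∑ k, p k * F (D k) - F u - ⟪gradient F u, hs - u⟫ := by
    intro u
    simp only [bregman, mul_sub]
    rw [Finset.sum_sub_distrib, Finset.sum_sub_distrib, key u, ← Finset.sum_mul, hpsum, one_mul]
  rw [expand, expand]
  have h1 : ⟪gradient F hs, hs - hs⟫ = 0 := by simp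
  have h2 := first_order F hFconv hFdiff h hs
  rw [h1]
  linarith
end

section
/- Let E be a real inner product space, let F : E → ℝ be strictly convex and differentiable, let K be a positive integer, let p_1, …, p_K be nonnegative real weights with p_1 + ⋯ + p_K = 1, and let D^1, …, D^K be points of E. Set h* = Σ_{k=1}^K p_k · D^k. Then h* is the unique minimizer of the map h ↦ Σ_{k=1}^K p_k · B_F(D^k, h); that is, if h ∈ E satisfies Σ_{k=1}^K p_k · B_F(D^k, h) ≤ Σ_{k=1}^K p_k · B_F(D^k, h') for all h' ∈ E, then h = h*. -/
open scoped RealInnerProductSpace BigOperators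

/-!
For weights summing to one, the weighted Bregman loss splits as
`∑ pₖ B_F(Dₖ, h) = (∑ pₖ F(Dₖ) - F(h*)) + B_F(h*, h)`, because `h ↦ ⟪∇F(h), Dₖ - h⟫` averages
to `⟪∇F(h), h* - h⟫`. Only the last term depends on `h`, and it vanishes at `h = h*`. A strictly
convex differentiable `F` lies strictly above its tangent planes (restrict it to the line through
the two points and compare the derivative with the secant slope), so `B_F(h*, h) > 0` for
`h ≠ h*`.
-/

theorem StrictConvexOn.comp_affineMap {𝕜 E F β : Type*} [Ring 𝕜] [PartialOrder 𝕜]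
    [AddCommGroup E] [AddCommGroup F] [AddCommMonoid β] [PartialOrder β]
    [Module 𝕜 E] [Module 𝕜 F] [SMul 𝕜 β] {f : F → β} {s : Set F}
    (hf : StrictConvexOn 𝕜 s f) (g : E →ᵃ[𝕜] F) (hg : Function.Injective g) :
    StrictConvexOn 𝕜 (g ⁻¹' s) (f ∘ g) :=
  ⟨hf.1.affine_preimage _, fun x hx y hy hxy a b ha hb hab =>
    calc
      (f ∘ g) (a • x + b • y) = f (a • g x + b • g y) := by
        rw [Function.comp_apply, Convex.combo_affine_apply hab]
      _ < a • f (g x) + b • f (g y) := hf.2 hx hy (hg.ne hxy) ha hb hab⟩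

section Bregman

variable {E : Type*} [NormedAddCommGroup E] [InnerProductSpace ℝ E] [CompleteSpace E]

@[simp]
theorem bregman_self (F : E → ℝ) (x : E) : bregman F x x = 0 := by
  simp [bregman]

theorem bregman_pos {F : E → ℝ} (hF : StrictConvexOn ℝ Set.univ F) {x y : E}
    (hFy : DifferentiableAt ℝ F y) (hxy : x ≠ y) : 0 < bregman F x y := by
  let g : ℝ →ᵃ[ℝ] E := AffineMap.lineMap y x
  have hconv : StrictConvexOn ℝ Set.univ (F ∘ g) :=
    hF.comp_affineMap g (AffineMap.lineMap_injective ℝ hxy.symm)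
  have hderiv : HasDerivAt (F ∘ g) ⟪gradient F y, x - y⟫ 0 := by
    have hF' : HasFDerivAt F (InnerProductSpace.toDual ℝ E (gradient F y)) (g 0) := by
      simpa [g] using hFy.hasGradientAt.hasFDerivAt
    simpa [g] using hF'.comp_hasDerivAt 0 AffineMap.hasDerivAt_lineMap
  have hslope : slope (F ∘ g) 0 1 = F x - F y := by simp [slope, g]
  have hlt := hconv.lt_slope_of_hasDerivAt (Set.mem_univ 0) (Set.mem_univ 1) one_pos hderiv
  rw [hslope] at hlt
  rw [bregman]
  linarith

theorem sum_mul_bregman_eq_add_bregman_sum_smul {ι : Type*} (s : Finset ι) (F : E → ℝ)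
    {p : ι → ℝ} (hp : ∑ i ∈ s, p i = 1) (D : ι → E) (y : E) :
    ∑ i ∈ s, p i * bregman F (D i) y =
      ∑ i ∈ s, p i * F (D i) - F (∑ i ∈ s, p i • D i) + bregman F (∑ i ∈ s, p i • D i) y := by
  have hmean : ∑ i ∈ s, p i • D i - y = ∑ i ∈ s, p i • (D i - y) := by
    simp only [smul_sub, Finset.sum_sub_distrib, ← Finset.sum_smul, hp, one_smul]
  have hinner : ⟪gradient F y, ∑ i ∈ s, p i • D i - y⟫ =
      ∑ i ∈ s, p i * ⟪gradient F y, D i - y⟫ := by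
    simp only [hmean, inner_sum, real_inner_smul_right]
  simp only [bregman, mul_sub, Finset.sum_sub_distrib, ← Finset.sum_mul, hp, one_mul, hinner]
  ring

end Bregman

theorem bregman_weighted_sum_unique_minimizer_general
    {E : Type*} [NormedAddCommGroup E] [InnerProductSpace ℝ E] [CompleteSpace E]
    (F : E → ℝ) (hFconv : StrictConvexOn ℝ Set.univ F) (hFdiff : Differentiable ℝ F)
    (K : ℕ) (p : Fin K → ℝ)
    (hpsum : ∑ k, p k = 1) (D : Fin K → E) (h : E)
    (hmin : ∀ h' : E,
      ∑ k, p k * bregman F (D k) h ≤ ∑ k, p k * bregman F (D k) h') :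
    h = ∑ k, p k • D k := by
  have hcentroid := hmin (∑ k, p k • D k)
  rw [sum_mul_bregman_eq_add_bregman_sum_smul _ F hpsum D h,
    sum_mul_bregman_eq_add_bregman_sum_smul _ F hpsum D, bregman_self] at hcentroid
  by_contra hne
  have hpos := bregman_pos hFconv (hFdiff h) (Ne.symm hne)
  linarith

/-- If `F` is strictly convex and differentiable, then `h* = ∑ k, p k • D k` is the
unique minimizer of `h ↦ ∑ k, p k * B_F(D k, h)`: any minimizer equals `h*`. -/
theorem bregman_weighted_sum_unique_minimizer
    {E : Type*} [NormedAddCommGroup E] [InnerProductSpace ℝ E] [CompleteSpace E]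
    (F : E → ℝ) (hFconv : StrictConvexOn ℝ Set.univ F) (hFdiff : Differentiable ℝ F)
    (K : ℕ) (hK : 0 < K) (p : Fin K → ℝ) (hp : ∀ k, 0 ≤ p k)
    (hpsum : ∑ k, p k = 1) (D : Fin K → E) (h : E)
    (hmin : ∀ h' : E,
      ∑ k, p k * bregman F (D k) h ≤ ∑ k, p k * bregman F (D k) h') :
    h = ∑ k, p k • D k :=
  bregman_weighted_sum_unique_minimizer_general F hFconv hFdiff K p hpsum D h hmin
end

section
/- Let E be a real inner product space, let F : E → ℝ be differentiable, let K be a positive integer, let p_1, …, p_K be nonnegative real weights with p_1 + ⋯ + p_K = 1, and let D^1, …, D^K be points of E. Set h* = Σ_{k=1}^K p_k · D^k. Then for every h ∈ E the identity Σ_{k=1}^K p_k · B_F(D^k, h) = Σ_{k=1}^K p_k · B_F(D^k, h*) + B_F(h*, h) holds. -/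
open scoped RealInnerProductSpace BigOperators

/-- The Bregman "parallelogram" identity for weighted sums: with `h* = ∑ k, p k • D k`,
`∑ k, p k * B_F(D k, h) = ∑ k, p k * B_F(D k, h*) + B_F(h*, h)` for every `h`. -/
theorem bregman_weighted_sum_identity
    {E : Type*} [NormedAddCommGroup E] [InnerProductSpace ℝ E] [CompleteSpace E]
    (F : E → ℝ) (hFdiff : Differentiable ℝ F)
    (K : ℕ) (hK : 0 < K) (p : Fin K → ℝ) (hp : ∀ k, 0 ≤ p k)
    (hpsum : ∑ k, p k = 1) (D : Fin K → E) :
    ∀ h : E,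
      ∑ k, p k * bregman F (D k) h
        = ∑ k, p k * bregman F (D k) (∑ k, p k • D k)
          + bregman F (∑ k, p k • D k) h := by
  intro h
  have key : ∀ g : E, ∑ k, p k * ⟪g, D k - (∑ k, p k • D k)⟫
      = ⟪g, (∑ k, p k • D k) - (∑ k, p k • D k)⟫ := by
    intro g
    simp only [inner_sub_right, mul_sub, Finset.sum_sub_distrib, inner_sum,
      real_inner_smul_right, ← Finset.sum_mul, hpsum, one_mul]
  have key2 : ∀ g : E, ∑ k, p k * ⟪g, D k - h⟫
      = ⟪g, (∑ k, p k • D k) - h⟫ := by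
    intro g
    simp only [inner_sub_right, mul_sub, Finset.sum_sub_distrib, inner_sum,
      real_inner_smul_right, ← Finset.sum_mul, hpsum, one_mul]
  simp only [bregman, mul_sub, Finset.sum_sub_distrib, ← Finset.sum_mul, hpsum, one_mul,
    key, key2]
  rw [sub_self, inner_zero_right]
  ring
end
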